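/- arXiv:1711.00846 — 2 statements merged into one kernel-verified Lean document; each statement's English description precedes it below -/
import Mathlib

section
/- The rank-3 lattice with Gram matrix [[0,0,N],[0,2d,0],[N,0,0]], where N = (4m+3)d for integers m ≥ 0 and d ≥ 1, does not represent −2: there is no vector v with (v.v) = −2. -/
/-- The rank-3 lattice with Gram matrix `[[0,0,N],[0,2d,0],[N,0,0]]`, where
`N = (4m+3)d`, `m ≥ 0`, `d ≥ 1`, does not represent `−2`: the quadratic form
`2Nxz + 2dy²` never takes the value `−2` on integers. -/
theorem stmt9 (m d x y z : ℤ) (hm : 0 ≤ m) (hd : 1 ≤ d) :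
    2 * ((4 * m + 3) * d) * x * z + 2 * d * y ^ 2 ≠ -2 := by
  intro h
  have hdiv : d * ((4 * m + 3) * x * z + y ^ 2) = -1 := by linarith [h]
  have hd1 : d = 1 := by
    have : d ∣ 1 := ⟨-((4 * m + 3) * x * z + y ^ 2), by linarith [hdiv]⟩
    exact le_antisymm (Int.le_of_dvd one_pos this) hd
  subst hd1
  have heq : (4 * m + 3) * x * z + y ^ 2 = -1 := by linarith
  -- let n = 4m+3 as a natural number
  obtain ⟨n, hnz⟩ : ∃ n : ℕ, (n : ℤ) = 4 * m + 3 :=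
    ⟨(4 * m + 3).toNat, Int.toNat_of_nonneg (by linarith)⟩
  have hmod : n % 4 = 3 := by omega
  have hodd : Odd n := Nat.odd_iff.mpr (by omega)
  -- y² ≡ -1 mod n
  have hsq : IsSquare (-1 : ZMod n) := by
    refine ⟨(y : ZMod n), ?_⟩
    have : ((n : ℤ)) ∣ y ^ 2 + 1 := ⟨-(x * z), by rw [hnz]; ring_nf; linarith [heq]⟩
    have h2 : ((y ^ 2 + 1 : ℤ) : ZMod n) = 0 := by
      exact_mod_cast (ZMod.intCast_zmod_eq_zero_iff_dvd _ n).mpr (by exact_mod_cast this)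
    push_cast at h2
    linear_combination -h2
  have hjac : jacobiSym (-1) n = -1 := by
    rw [jacobiSym.at_neg_one hodd, ZMod.χ₄_nat_three_mod_four hmod]
  exact ZMod.nonsquare_of_jacobiSym_eq_neg_one hjac (by exact_mod_cast hsq)
end

section
/- The invariant factors (g₁, g₂, g₃) of the integer matrix [[2b, c, a],[c, 2d, 0],[a, 0, 0]] (a ∈ Z_{>0}, b,c,d ∈ Z, d > 0) are g₁ = gcd(a, 2b, c, 2d), g₂ = gcd(a², ac, 2ad, 4bd − c²)/g₁, and g₃ = 2a²d/(g₁·g₂); in particular g₁g₂g₃ = |det| = 2a²d. Hence the discriminant group of the corresponding lattice is Z/g₁ ⊕ Z/g₂ ⊕ Z/g₃. -/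
/-!
Multiplying by unimodular matrices preserves the gcd of the entries, the gcd of the `2 × 2`
minors (the entries of the adjugate) and, up to sign, the determinant. Over the PID `ℤ` a nonsingular
matrix is equivalent to a diagonal one, and replacing two diagonal entries `x, y` by
`gcd x y, xy / gcd x y` (an explicit unimodular move, by Bézout) three times brings it to
`diag(t₀, t₁, t₂)` with `t₀ ∣ t₁ ∣ t₂`. For this form the three invariants are `t₀`, `t₀t₁` and
`t₀t₁t₂`; computing them directly for the Gram matrix identifies `tᵢ` with `gᵢ`, and the cokernel
of a diagonal matrix is the product of the cyclic groups `ℤ/tᵢ`.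
-/

open Matrix

namespace Matrix

variable {n R : Type*} [Fintype n] [DecidableEq n] [CommRing R]

def UnimodularlyEquivalent (A B : Matrix n n R) : Prop :=
  ∃ P Q : Matrix n n R, IsUnit P.det ∧ IsUnit Q.det ∧ P * A * Q = B

namespace UnimodularlyEquivalent

variable {A B C : Matrix n n R}

@[refl]
theorem refl (A : Matrix n n R) : UnimodularlyEquivalent A A :=
  ⟨1, 1, by simp, by simp, by simp⟩

theorem trans (hAB : UnimodularlyEquivalent A B) (hBC : UnimodularlyEquivalent B C) :
    UnimodularlyEquivalent A C := by
  obtain ⟨P, Q, hP, hQ, rfl⟩ := hAB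
  obtain ⟨P', Q', hP', hQ', rfl⟩ := hBC
  refine ⟨P' * P, Q * Q', by simpa using hP'.mul hP, by simpa using hQ.mul hQ', ?_⟩
  simp only [Matrix.mul_assoc]

instance : @Trans (Matrix n n R) _ _ UnimodularlyEquivalent UnimodularlyEquivalent
    UnimodularlyEquivalent :=
  ⟨trans⟩

theorem symm (h : UnimodularlyEquivalent A B) : UnimodularlyEquivalent B A := by
  obtain ⟨P, Q, hP, hQ, rfl⟩ := h
  refine ⟨P⁻¹, Q⁻¹, isUnit_nonsing_inv_det P hP, isUnit_nonsing_inv_det Q hQ, ?_⟩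
  rw [← Matrix.mul_assoc, ← Matrix.mul_assoc, nonsing_inv_mul P hP, Matrix.one_mul,
    Matrix.mul_assoc, mul_nonsing_inv Q hQ, Matrix.mul_one]

theorem adjugate (h : UnimodularlyEquivalent A B) :
    UnimodularlyEquivalent A.adjugate B.adjugate := by
  obtain ⟨P, Q, hP, hQ, rfl⟩ := h
  refine ⟨Q.adjugate, P.adjugate, ?_, ?_, ?_⟩
  · rw [det_adjugate]; exact hQ.pow _
  · rw [det_adjugate]; exact hP.pow _
  · rw [adjugate_mul_distrib, adjugate_mul_distrib, Matrix.mul_assoc]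

theorem associated_det (h : UnimodularlyEquivalent A B) : Associated A.det B.det := by
  obtain ⟨P, Q, hP, hQ, rfl⟩ := h
  rw [det_mul, det_mul, mul_comm P.det]
  exact (associated_mul_unit_right _ _ hP).trans (associated_mul_unit_right _ _ hQ)

theorem dvd_of_forall_dvd (h : UnimodularlyEquivalent A B) {x : R} (hA : ∀ i j, x ∣ A i j)
    (i j : n) : x ∣ B i j := by
  obtain ⟨P, Q, -, -, rfl⟩ := h
  simp only [mul_apply]
  exact Finset.dvd_sum fun k _ => (Finset.dvd_sum fun l _ => (hA l k).mul_left _).mul_right _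

theorem forall_dvd_iff (h : UnimodularlyEquivalent A B) {x : R} :
    (∀ i j, x ∣ A i j) ↔ ∀ i j, x ∣ B i j :=
  ⟨h.dvd_of_forall_dvd, h.symm.dvd_of_forall_dvd⟩

theorem exists_map_range_toLin' (h : UnimodularlyEquivalent A B) :
    ∃ e : (n → R) ≃ₗ[R] (n → R),
      (LinearMap.range (toLin' A)).map (e : (n → R) →ₗ[R] (n → R)) =
        LinearMap.range (toLin' B) := by
  obtain ⟨P, Q, hP, hQ, rfl⟩ := h
  have := P.invertibleOfIsUnitDet hP
  have := Q.invertibleOfIsUnitDet hQ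
  refine ⟨P.toLinearEquiv' ‹_›, ?_⟩
  have hQ_surj : LinearMap.range (toLin' Q) = ⊤ :=
    LinearMap.range_eq_top.mpr (Q.toLinearEquiv' ‹_›).surjective
  rw [toLin'_mul, toLin'_mul, LinearMap.range_comp_of_range_eq_top _ hQ_surj,
    LinearMap.range_comp]
  rfl

end UnimodularlyEquivalent

theorem range_toLin'_diagonal (s : n → R) :
    LinearMap.range (toLin' (diagonal s)) = Submodule.pi Set.univ fun i => Ideal.span {s i} := by
  ext x
  simp only [LinearMap.mem_range, Submodule.mem_pi, Set.mem_univ, forall_true_left,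
    Ideal.mem_span_singleton, toLin'_apply, funext_iff, mulVec_diagonal]
  constructor
  · rintro ⟨y, hy⟩ i
    exact ⟨y i, (hy i).symm⟩
  · intro h
    choose y hy using h
    exact ⟨y, fun i => (hy i).symm⟩

theorem UnimodularlyEquivalent.nonempty_quotient_range_equiv_pi {A : Matrix n n R} {s : n → R}
    (h : UnimodularlyEquivalent A (diagonal s)) :
    Nonempty (((n → R) ⧸ LinearMap.range (toLin' A)) ≃ₗ[R] Π i, R ⧸ Ideal.span {s i}) := by
  obtain ⟨e, he⟩ := h.exists_map_range_toLin'
  rw [range_toLin'_diagonal] at he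
  exact ⟨(Submodule.Quotient.equiv _ _ e he).trans (Submodule.quotientPi _)⟩

omit [Fintype n] in
theorem forall_dvd_diagonal_iff {s : n → R} {x : R} :
    (∀ i j, x ∣ diagonal s i j) ↔ ∀ i, x ∣ s i := by
  refine ⟨fun h i => by simpa using h i i, fun h i j => ?_⟩
  rcases eq_or_ne i j with rfl | hij
  · simpa using h i
  · simp [hij]

theorem unimodularlyEquivalent_diagonal_comp (s : n → R) (σ : Equiv.Perm n) :
    UnimodularlyEquivalent (diagonal s) (diagonal (s ∘ σ)) := by
  refine ⟨σ.permMatrix R, σ⁻¹.permMatrix R, ?_, ?_, ?_⟩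
  · rw [det_permutation]; exact (Units.isUnit _).map (Int.castRingHom R)
  · rw [det_permutation]; exact (Units.isUnit _).map (Int.castRingHom R)
  · rw [PEquiv.toMatrix_toPEquiv_mul, PEquiv.mul_toMatrix_toPEquiv,
      Equiv.Perm.inv_def, Equiv.symm_symm, submatrix_submatrix, Function.id_comp,
      Function.comp_id, submatrix_diagonal_equiv]

theorem unimodularlyEquivalent_diagonal_of_associated {s t : n → R}
    (h : ∀ i, Associated (s i) (t i)) : UnimodularlyEquivalent (diagonal s) (diagonal t) := by
  choose u hu using h
  refine ⟨diagonal fun i => (u i : R), 1, ?_, by simp, ?_⟩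
  · rw [det_diagonal, ← Units.coe_prod]; exact Units.isUnit _
  · rw [Matrix.mul_one, diagonal_mul_diagonal]
    congr 1; funext i; rw [mul_comm, hu]

theorem exists_unimodularlyEquivalent_diagonal [IsDomain R] [IsPrincipalIdealRing R]
    (A : Matrix n n R) (hA : A.det ≠ 0) : ∃ s : n → R, UnimodularlyEquivalent A (diagonal s) := by
  have hinj : Function.Injective (toLin' A) := by
    rw [injective_iff_map_eq_zero]
    intro v hv
    by_contra hv0
    exact hA (exists_mulVec_eq_zero_iff.mp ⟨v, hv0, hv⟩)
  let e := LinearEquiv.ofInjective (toLin' A) hinj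
  obtain ⟨bM, s, bN, hsnf⟩ :=
    Submodule.exists_smith_normal_form_of_rank_eq (Pi.basisFun R n) e.finrank_eq.symm
  let bD := bN.map e.symm
  have hdiag : LinearMap.toMatrix bD bM (toLin' A) = diagonal s := by
    ext i j
    have : toLin' A (bD j) = s j • bM j := by
      rw [← hsnf]; exact congrArg Subtype.val (e.apply_symm_apply (bN j))
    rw [LinearMap.toMatrix_apply, this, map_smul, bM.repr_self]
    rcases eq_or_ne i j with rfl | hij
    · simp
    · simp [hij]
  have := bM.invertibleToMatrix (Pi.basisFun R n)
  have := (Pi.basisFun R n).invertibleToMatrix bD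
  refine ⟨s, bM.toMatrix (Pi.basisFun R n), (Pi.basisFun R n).toMatrix bD,
    isUnit_det_of_invertible _, isUnit_det_of_invertible _, ?_⟩
  rw [← hdiag, ← basis_toMatrix_mul_linearMap_toMatrix_mul_basis_toMatrix bD (Pi.basisFun R n)
    bM (Pi.basisFun R n), LinearMap.toMatrix_eq_toMatrix', LinearMap.toMatrix'_toLin']

theorem adjugate_diagonal_vec3 (a b c : R) :
    adjugate (diagonal ![a, b, c]) = diagonal ![b * c, a * c, a * b] := by
  rw [adjugate_fin_three]
  ext i j; fin_cases i <;> fin_cases j <;> simp [mul_comm]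

theorem unimodularlyEquivalent_diagonal_vec3_swap (a b c : R) :
    UnimodularlyEquivalent (diagonal ![a, b, c]) (diagonal ![a, c, b]) := by
  convert unimodularlyEquivalent_diagonal_comp ![a, b, c] (Equiv.swap 1 2) using 2
  ext i; fin_cases i <;> rfl

theorem unimodularlyEquivalent_diagonal_vec3_rotate (a b c : R) :
    UnimodularlyEquivalent (diagonal ![a, b, c]) (diagonal ![b, c, a]) := by
  convert unimodularlyEquivalent_diagonal_comp ![a, b, c] (finRotate 3) using 2
  ext i; fin_cases i <;> rfl

theorem unimodularlyEquivalent_diagonal_vec3_of_bezout {u v x y : R} (g z : R)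
    (h : u * x + v * y = 1) :
    UnimodularlyEquivalent (diagonal ![g * x, g * y, z]) (diagonal ![g, g * x * y, z]) := by
  refine ⟨!![u, v, 0; -y, x, 0; 0, 0, 1], !![1, -(v * y), 0; 1, u * x, 0; 0, 0, 1], ?_, ?_, ?_⟩
  · rw [det_fin_three]; simp [h ▸ isUnit_one, mul_comm]
  · rw [det_fin_three]; simp [h ▸ isUnit_one, mul_comm]
  · rw [diagonal_vec3, diagonal_vec3, mul_fin_three, mul_fin_three]
    ext i j
    fin_cases i <;> fin_cases j <;> simp <;>
      first | ring1 | linear_combination g * h | linear_combination g * x * y * h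

end Matrix

theorem exists_unimodularlyEquivalent_diagonal_gcd (x y z : ℤ) :
    ∃ m : ℤ, UnimodularlyEquivalent (diagonal ![x, y, z]) (diagonal ![(x.gcd y : ℤ), m, z]) ∧
      (x.gcd y : ℤ) ∣ m := by
  rcases eq_or_ne (x.gcd y) 0 with hg | hg
  · obtain ⟨rfl, rfl⟩ := Int.gcd_eq_zero_iff.mp hg
    exact ⟨0, by rw [hg, Nat.cast_zero], dvd_rfl⟩
  obtain ⟨x', hx⟩ := Int.gcd_dvd_left x y
  obtain ⟨y', hy⟩ := Int.gcd_dvd_right x y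
  have hbezout : Int.gcdA x y * x' + Int.gcdB x y * y' = 1 := by
    refine mul_left_cancel₀ (Int.natCast_ne_zero.mpr hg) ?_
    linear_combination (Int.gcd_eq_gcd_ab x y).symm - Int.gcdA x y * hx - Int.gcdB x y * hy
  refine ⟨x * y', ?_, (Int.gcd_dvd_left x y).mul_right _⟩
  have h := unimodularlyEquivalent_diagonal_vec3_of_bezout (x.gcd y : ℤ) z hbezout
  rwa [← hx, ← hy] at h

theorem exists_unimodularlyEquivalent_diagonal_dvd_chain (x y z : ℤ) :
    ∃ t₀ t₁ t₂ : ℤ, UnimodularlyEquivalent (diagonal ![x, y, z]) (diagonal ![t₀, t₁, t₂]) ∧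
      t₀ ∣ t₁ ∧ t₁ ∣ t₂ := by
  obtain ⟨m₁, h₁, hm₁⟩ := exists_unimodularlyEquivalent_diagonal_gcd x y z
  set g₁ : ℤ := (x.gcd y : ℤ)
  obtain ⟨m₂, h₂, hm₂⟩ := exists_unimodularlyEquivalent_diagonal_gcd g₁ z m₁
  set g₂ : ℤ := (g₁.gcd z : ℤ)
  obtain ⟨m₃, h₃, hm₃⟩ := exists_unimodularlyEquivalent_diagonal_gcd m₂ m₁ g₂
  have hg₂ : g₂ ∣ m₂.gcd m₁ :=
    Int.dvd_coe_gcd hm₂ ((Int.gcd_dvd_left g₁ z).trans hm₁)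
  refine ⟨g₂, m₂.gcd m₁, m₃, ?_, hg₂, hm₃⟩
  calc UnimodularlyEquivalent (diagonal ![x, y, z]) (diagonal ![g₁, m₁, z]) := h₁
    UnimodularlyEquivalent _ (diagonal ![g₁, z, m₁]) := unimodularlyEquivalent_diagonal_vec3_swap ..
    UnimodularlyEquivalent _ (diagonal ![g₂, m₂, m₁]) := h₂
    UnimodularlyEquivalent _ (diagonal ![m₂, m₁, g₂]) :=
      unimodularlyEquivalent_diagonal_vec3_rotate ..
    UnimodularlyEquivalent _ (diagonal ![(m₂.gcd m₁ : ℤ), m₃, g₂]) := h₃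
    UnimodularlyEquivalent _ (diagonal ![m₃, g₂, (m₂.gcd m₁ : ℤ)]) :=
      unimodularlyEquivalent_diagonal_vec3_rotate ..
    UnimodularlyEquivalent _ (diagonal ![g₂, (m₂.gcd m₁ : ℤ), m₃]) :=
      unimodularlyEquivalent_diagonal_vec3_rotate ..

theorem exists_smith_normal_form_fin_three (A : Matrix (Fin 3) (Fin 3) ℤ) (hA : A.det ≠ 0) :
    ∃ t₀ t₁ t₂ : ℕ, UnimodularlyEquivalent A (diagonal ![(t₀ : ℤ), t₁, t₂]) ∧
      t₀ ∣ t₁ ∧ t₁ ∣ t₂ := by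
  obtain ⟨s, hs⟩ := exists_unimodularlyEquivalent_diagonal A hA
  obtain ⟨t₀, t₁, t₂, ht, h₀₁, h₁₂⟩ :=
    exists_unimodularlyEquivalent_diagonal_dvd_chain (s 0) (s 1) (s 2)
  refine ⟨t₀.natAbs, t₁.natAbs, t₂.natAbs, ?_, Int.natAbs_dvd_natAbs.mpr h₀₁,
    Int.natAbs_dvd_natAbs.mpr h₁₂⟩
  rw [← FinVec.etaExpand_eq s] at hs
  refine (hs.trans ht).trans (unimodularlyEquivalent_diagonal_of_associated fun i => ?_)
  fin_cases i <;> exact Int.associated_natAbs _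

namespace Matrix.UnimodularlyEquivalent

variable {A : Matrix (Fin 3) (Fin 3) ℤ} {t₀ t₁ t₂ : ℕ}

theorem forall_dvd_iff_dvd_fin_three (hA : UnimodularlyEquivalent A (diagonal ![(t₀ : ℤ), t₁, t₂]))
    (h₀₁ : t₀ ∣ t₁) (h₁₂ : t₁ ∣ t₂) (x : ℤ) : (∀ i j, x ∣ A i j) ↔ x ∣ t₀ := by
  rw [hA.forall_dvd_iff, forall_dvd_diagonal_iff, Fin.forall_fin_succ, Fin.forall_fin_two]
  have h₀₁' := Int.natCast_dvd_natCast.mpr h₀₁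
  have h₁₂' := Int.natCast_dvd_natCast.mpr h₁₂
  exact ⟨fun h => h.1, fun h => ⟨h, h.trans h₀₁', h.trans (h₀₁'.trans h₁₂')⟩⟩

theorem forall_dvd_adjugate_iff_dvd_fin_three
    (hA : UnimodularlyEquivalent A (diagonal ![(t₀ : ℤ), t₁, t₂]))
    (h₀₁ : t₀ ∣ t₁) (h₁₂ : t₁ ∣ t₂) (x : ℤ) :
    (∀ i j, x ∣ A.adjugate i j) ↔ x ∣ (t₀ * t₁ : ℕ) := by
  rw [hA.adjugate.forall_dvd_iff, adjugate_diagonal_vec3, forall_dvd_diagonal_iff,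
    Fin.forall_fin_succ, Fin.forall_fin_two]
  simp only [Fin.isValue, cons_val_zero, Fin.succ_zero_eq_one, cons_val_one, cons_val_succ]
  push_cast
  have h₀₂ := Int.natCast_dvd_natCast.mpr (h₀₁.trans h₁₂)
  have h₁₂' := Int.natCast_dvd_natCast.mpr h₁₂
  refine ⟨fun h => h.2.2, fun h => ⟨h.trans ?_, h.trans (mul_dvd_mul_left _ h₁₂'), h⟩⟩
  rw [mul_comm (t₁ : ℤ)]
  exact mul_dvd_mul h₀₂ dvd_rfl

theorem natAbs_det_fin_three (hA : UnimodularlyEquivalent A (diagonal ![(t₀ : ℤ), t₁, t₂])) :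
    A.det.natAbs = t₀ * t₁ * t₂ := by
  rw [Int.associated_iff_natAbs.mp hA.associated_det, det_diagonal, Fin.prod_univ_three]
  simp [Int.natAbs_mul]

end Matrix.UnimodularlyEquivalent

noncomputable def quotientSpanPiEquivZModProd (t₀ t₁ t₂ : ℕ) :
    (Π i, ℤ ⧸ Ideal.span {![(t₀ : ℤ), t₁, t₂] i}) ≃+ ZMod t₀ × ZMod t₁ × ZMod t₂ :=
  ((Fin.consLinearEquiv ℤ _).symm.trans
      ((LinearEquiv.refl ℤ _).prodCongr (LinearEquiv.piFinTwo ℤ _))).toAddEquiv.trans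
    ((Int.quotientSpanNatEquivZMod t₀).toAddEquiv.prodCongr
      ((Int.quotientSpanNatEquivZMod t₁).toAddEquiv.prodCongr
        (Int.quotientSpanNatEquivZMod t₂).toAddEquiv))

section Gram

variable (a b c d : ℤ)

def latticeGram : Matrix (Fin 3) (Fin 3) ℤ :=
  !![2 * b, c, a; c, 2 * d, 0; a, 0, 0]

theorem det_latticeGram : (latticeGram a b c d).det = -(2 * a ^ 2 * d) := by
  simp only [latticeGram, det_fin_three, of_apply, cons_val', cons_val_zero, cons_val_fin_one,
    cons_val_one, cons_val]
  ring

theorem adjugate_latticeGram : (latticeGram a b c d).adjugate =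
    !![0, 0, -(2 * a * d); 0, -a ^ 2, a * c; -(2 * a * d), a * c, 4 * b * d - c ^ 2] := by
  rw [latticeGram, adjugate_fin_three_of]
  ext i j
  fin_cases i <;> fin_cases j <;> simp <;> ring

variable {a b c d}

theorem forall_dvd_latticeGram_iff (x : ℤ) :
    (∀ i j, x ∣ latticeGram a b c d i j) ↔ x ∣ (a.gcd ((2 * b).gcd (c.gcd (2 * d))) : ℤ) := by
  simp only [latticeGram, Fin.forall_fin_succ, Int.coe_gcd, dvd_gcd_iff, of_apply, cons_val',
    cons_val_zero, cons_val_fin_one, cons_val_succ, IsEmpty.forall_iff, and_true, dvd_zero]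
  tauto

theorem forall_dvd_adjugate_latticeGram_iff (x : ℤ) :
    (∀ i j, x ∣ (latticeGram a b c d).adjugate i j) ↔
      x ∣ ((a ^ 2).gcd ((a * c).gcd ((2 * a * d).gcd (4 * b * d - c ^ 2))) : ℤ) := by
  simp only [adjugate_latticeGram, Fin.forall_fin_succ, Int.coe_gcd, dvd_gcd_iff, of_apply,
    cons_val', cons_val_zero, cons_val_fin_one, cons_val_succ, IsEmpty.forall_iff, and_true,
    dvd_zero, dvd_neg, true_and]
  tauto

end Gram

/-- The invariant factors of `[[2b, c, a],[c, 2d, 0],[a, 0, 0]]` are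
`g₁ = gcd(a,2b,c,2d)`, `g₂ = gcd(a²,ac,2ad,4bd−c²)/g₁`, `g₃ = 2a²d/(g₁g₂)`;
in particular `g₁g₂g₃ = |det| = 2a²d`, and the quotient group (discriminant
group of the corresponding lattice) is `ℤ/g₁ ⊕ ℤ/g₂ ⊕ ℤ/g₃`. -/
theorem stmt11 (a b c d : ℤ) (ha : 0 < a) (hd : 0 < d)
    (M : Matrix (Fin 3) (Fin 3) ℤ) (hM : M = !![2*b, c, a; c, 2*d, 0; a, 0, 0])
    (g₁ g₂ g₃ : ℕ)
    (hg₁ : g₁ = Int.gcd a (Int.gcd (2*b) (Int.gcd c (2*d))))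
    (hg₂ : g₂ = Int.gcd (a^2) (Int.gcd (a*c) (Int.gcd (2*a*d) (4*b*d - c^2))) / g₁)
    (hg₃ : g₃ = (2*a^2*d).toNat / (g₁ * g₂)) :
    ((g₁ * g₂ * g₃ : ℕ) : ℤ) = |M.det| ∧ |M.det| = 2*a^2*d ∧
    g₁ ∣ g₂ ∧ g₂ ∣ g₃ ∧
    (∃ P Q : Matrix (Fin 3) (Fin 3) ℤ, IsUnit P.det ∧ IsUnit Q.det ∧
      P * M * Q = Matrix.diagonal ![(g₁ : ℤ), (g₂ : ℤ), (g₃ : ℤ)]) ∧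
    Nonempty (((Fin 3 → ℤ) ⧸ LinearMap.range (Matrix.toLin' M)) ≃+
      (ZMod g₁ × ZMod g₂ × ZMod g₃)) := by
  change M = latticeGram a b c d at hM
  have hpos : 0 < 2 * a ^ 2 * d := by positivity
  have hdet : M.det = -(2 * a ^ 2 * d) := hM ▸ det_latticeGram a b c d
  obtain ⟨t₀, t₁, t₂, hA, h₀₁, h₁₂⟩ :=
    exists_smith_normal_form_fin_three M (by rw [hdet]; exact neg_ne_zero.mpr hpos.ne')
  have hprod : t₀ * t₁ * t₂ = (2 * a ^ 2 * d).toNat := by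
    rw [← hA.natAbs_det_fin_three, hdet]; omega
  have ht₀ : t₀ = g₁ := Nat.dvd_left_iff_eq.mp fun x => by
    simp only [← Int.natCast_dvd_natCast]
    rw [← hA.forall_dvd_iff_dvd_fin_three h₀₁ h₁₂, hM, forall_dvd_latticeGram_iff, hg₁]
  have ht₀₁ : t₀ * t₁ = (a ^ 2).gcd ((a * c).gcd ((2 * a * d).gcd (4 * b * d - c ^ 2))) :=
    Nat.dvd_left_iff_eq.mp fun x => by
      simp only [← Int.natCast_dvd_natCast]
      rw [← hA.forall_dvd_adjugate_iff_dvd_fin_three h₀₁ h₁₂, hM,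
        forall_dvd_adjugate_latticeGram_iff]
  have ht₀₁_ne : t₀ * t₁ ≠ 0 := left_ne_zero_of_mul (by omega : t₀ * t₁ * t₂ ≠ 0)
  have ht₁ : t₁ = g₂ := by
    rw [hg₂, ← ht₀₁, ← ht₀,
      Nat.mul_div_cancel_left _ (Nat.pos_of_ne_zero (left_ne_zero_of_mul ht₀₁_ne))]
  have ht₂ : t₂ = g₃ := by
    rw [hg₃, ← hprod, ← ht₀, ← ht₁, Nat.mul_div_cancel_left _ (Nat.pos_of_ne_zero ht₀₁_ne)]
  subst ht₀ ht₁ ht₂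
  obtain ⟨e⟩ := hA.nonempty_quotient_range_equiv_pi
  refine ⟨?_, by rw [hdet, abs_neg, abs_of_pos hpos], h₀₁, h₁₂, hA,
    ⟨e.toAddEquiv.trans (quotientSpanPiEquivZModProd _ _ _)⟩⟩
  rw [hprod, hdet, abs_neg, abs_of_pos hpos]; omega
end
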